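/- Let f ∈ F_L, let δ < √(6/L), and let X_δ be the solution of the smoothed ODE Ẍ_δ + (3/max(δ,t))Ẋ_δ + ∇f(X_δ) = 0 with X_δ(0) = x₀, Ẋ_δ(0) = 0, with M_δ(t) = sup_{u ∈ (0,t]} ‖Ẋ_δ(u)‖/u. Then for every t with δ < t < √(12/L), M_δ(t) ≤ (5 − Lδ²/6)·‖∇f(x₀)‖ / (4(1 − Lδ²/6)(1 − Lt²/12)). -/

import Mathlib

/-! Write `M(t) = sup_{0<u≤t} ‖Ẋ(u)‖/u`. Along the trajectory
`‖∇f(X s)‖ ≤ ‖∇f(x₀)‖ + L‖X s - x₀‖ ≤ ‖∇f(x₀)‖ + L M s²/2`. On `[0, δ]` the damping `3/δ` is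
constant and `e^{3s/δ} Ẋ` has derivative `-e^{3s/δ} ∇f(X)`; on `[δ, t]` the damping is `3/s`
and `s³ Ẋ` has derivative `-s³ ∇f(X)`. Integrating gives the self-referential bounds
`M(δ) ≤ ‖∇f(x₀)‖ + (Lδ²/6) M(δ)` and
`M(t) ≤ ‖∇f(x₀)‖/(1 - Lδ²/6) + ‖∇f(x₀)‖/4 + (Lt²/12) M(t)`,
which can be solved for `M` because `Lδ²/6 < 1` and `Lt²/12 < 1`. The suprema are finite since
`Ẍ` is continuous on `[0, t]` and `Ẋ(0) = 0`. -/

open Set Filter Topology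

noncomputable section

abbrev E (n : ℕ) := EuclideanSpace ℝ (Fin n)

def MemFL (n : ℕ) (L : ℝ) (f : E n → ℝ) : Prop :=
  ConvexOn ℝ Set.univ f ∧ ContDiff ℝ 1 f ∧
    ∀ x y, ‖gradient f x - gradient f y‖ ≤ L * ‖x - y‖

/-- The solution `X` (with velocity `V = Ẋ`) of the smoothed ODE
`Ẍ + (3/max(δ,t))Ẋ + ∇f(X) = 0`, `X(0) = x₀`, `Ẋ(0) = 0`, on `[0,∞)`. -/
def SmoothedSol (n : ℕ) (f : E n → ℝ) (δ : ℝ) (x0 : E n) (X V : ℝ → E n) : Prop :=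
  X 0 = x0 ∧ V 0 = 0 ∧
  (∀ t ∈ Set.Ici (0:ℝ), HasDerivWithinAt X (V t) (Set.Ici 0) t) ∧
  (∀ t ∈ Set.Ici (0:ℝ),
    HasDerivWithinAt V (-(3 / max δ t) • V t - gradient f (X t)) (Set.Ici 0) t)

section DampedGrowth

variable {F : Type*} [NormedAddCommGroup F] [NormedSpace ℝ F]

theorem norm_sub_le_sub_of_hasDerivWithinAt {W W' : ℝ → F} {P p : ℝ → ℝ} {a b : ℝ}
    (hab : a ≤ b) (hW : ∀ x ∈ Icc a b, HasDerivWithinAt W (W' x) (Ici a) x)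
    (hP : ∀ x, HasDerivAt P (p x) x) (hbound : ∀ x ∈ Ico a b, ‖W' x‖ ≤ p x) :
    ‖W b - W a‖ ≤ P b - P a :=
  image_norm_le_of_norm_deriv_right_le_deriv_boundary (f := fun x => W x - W a)
    (B := fun x => P x - P a)
    (fun x hx => ((hW x hx).continuousWithinAt.mono Icc_subset_Ici_self).sub
      continuousWithinAt_const)
    (fun x hx => ((hW x (Ico_subset_Icc_self hx)).mono (Ici_subset_Ici.2 hx.1)).sub_const _)
    (by simp) (fun x => (hP x).sub_const _) hbound ⟨hab, le_rfl⟩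

theorem exists_norm_le_mul_of_hasDerivWithinAt {V V' : ℝ → F} {t : ℝ}
    (hV : ∀ s ∈ Icc 0 t, HasDerivWithinAt V (V' s) (Ici 0) s) (hV' : ContinuousOn V' (Icc 0 t))
    (hV0 : V 0 = 0) : ∃ C, ∀ u ∈ Icc 0 t, ‖V u‖ ≤ C * u := by
  obtain ⟨C, hC⟩ := isCompact_Icc.exists_bound_of_continuousOn hV'
  refine ⟨C, fun u hu => ?_⟩
  simpa [hV0, mul_comm] using norm_sub_le_sub_of_hasDerivWithinAt hu.1
    (fun s hs => hV s ⟨hs.1, hs.2.trans hu.2⟩) (fun s => hasDerivAt_mul_const C)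
    (fun s hs => hC s ⟨hs.1, hs.2.le.trans hu.2⟩)

theorem norm_le_add_of_hasDerivWithinAt_neg_smul_sub {V g : ℝ → F} {P p : ℝ → ℝ} {a b c : ℝ}
    (hab : a ≤ b) (hc : 0 ≤ c)
    (hV : ∀ x ∈ Icc a b, HasDerivWithinAt V (-c • V x - g x) (Ici a) x)
    (hP : ∀ x, HasDerivAt P (p x) x) (hg : ∀ x ∈ Ico a b, ‖g x‖ ≤ p x) :
    ‖V b‖ ≤ ‖V a‖ + (P b - P a) := by
  have hW : ∀ x ∈ Icc a b, HasDerivWithinAt (fun s => Real.exp (c * s) • V s)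
      (Real.exp (c * x) • -g x) (Ici a) x := by
    intro x hx
    have he : HasDerivAt (fun s => Real.exp (c * s)) (Real.exp (c * x) * c) x := by
      simpa using ((hasDerivAt_id x).const_mul c).exp
    refine (he.hasDerivWithinAt.smul (hV x hx)).congr_deriv ?_
    match_scalars <;> ring
  have hbound : ∀ x ∈ Ico a b, ‖Real.exp (c * x) • -g x‖ ≤ Real.exp (c * b) * p x := by
    intro x hx
    rw [norm_smul, norm_neg, Real.norm_of_nonneg (Real.exp_pos _).le]
    exact mul_le_mul (Real.exp_le_exp.2 (by nlinarith [hx.2])) (hg x hx) (norm_nonneg _)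
      (Real.exp_pos _).le
  have key := norm_sub_le_sub_of_hasDerivWithinAt hab hW (fun x => (hP x).const_mul _) hbound
  have hexp : Real.exp (c * a) ≤ Real.exp (c * b) := Real.exp_le_exp.2 (by nlinarith)
  have hnorm := norm_sub_norm_le (Real.exp (c * b) • V b) (Real.exp (c * a) • V a)
  simp only [norm_smul, Real.norm_of_nonneg (Real.exp_pos _).le] at hnorm
  refine le_of_mul_le_mul_left ?_ (Real.exp_pos (c * b))
  nlinarith [mul_le_mul_of_nonneg_right hexp (norm_nonneg (V a))]

theorem pow_mul_norm_le_add_of_hasDerivWithinAt_neg_div_smul_sub {V g : ℝ → F} {P p : ℝ → ℝ}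
    {a b : ℝ} (k : ℕ) (ha : 0 < a) (hab : a ≤ b)
    (hV : ∀ x ∈ Icc a b, HasDerivWithinAt V (-(k / x) • V x - g x) (Ici a) x)
    (hP : ∀ x, HasDerivAt P (x ^ k * p x) x) (hg : ∀ x ∈ Ico a b, ‖g x‖ ≤ p x) :
    b ^ k * ‖V b‖ ≤ a ^ k * ‖V a‖ + (P b - P a) := by
  have hW : ∀ x ∈ Icc a b, HasDerivWithinAt (fun s => s ^ k • V s) (x ^ k • -g x) (Ici a) x := by
    intro x hx
    have hx0 : x ≠ 0 := (ha.trans_le hx.1).ne'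
    refine ((hasDerivAt_pow k x).hasDerivWithinAt.smul (hV x hx)).congr_deriv ?_
    rcases k with _ | k
    · simp
    · rw [Nat.add_sub_cancel]
      match_scalars
      · field_simp
        ring
      · ring
  have hbound : ∀ x ∈ Ico a b, ‖x ^ k • -g x‖ ≤ x ^ k * p x := by
    intro x hx
    rw [norm_smul, norm_neg, Real.norm_of_nonneg (pow_nonneg (ha.le.trans hx.1) k)]
    exact mul_le_mul_of_nonneg_left (hg x hx) (pow_nonneg (ha.le.trans hx.1) k)
  have key := norm_sub_le_sub_of_hasDerivWithinAt hab hW hP hbound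
  have hnorm := norm_sub_norm_le (b ^ k • V b) (a ^ k • V a)
  simp only [norm_smul, Real.norm_of_nonneg (pow_nonneg ha.le k),
    Real.norm_of_nonneg (pow_nonneg (ha.le.trans hab) k)] at hnorm
  linarith

end DampedGrowth

section SpeedRatio

variable {F : Type*} [NormedAddCommGroup F] {V : ℝ → F} {t C u : ℝ}

/-- The paper's `M_δ(t)`. Being a real `sSup`, it is `0` when the ratios are unbounded, so every
use goes through a `BddAbove` hypothesis. -/
def supSpeedRatio (V : ℝ → F) (t : ℝ) : ℝ := sSup ((fun u => ‖V u‖ / u) '' Ioc 0 t)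

theorem bddAbove_speedRatio (h : ∀ u ∈ Ioc 0 t, ‖V u‖ ≤ C * u) :
    BddAbove ((fun u => ‖V u‖ / u) '' Ioc 0 t) :=
  ⟨C, forall_mem_image.2 fun u hu => (div_le_iff₀ hu.1).2 (h u hu)⟩

theorem norm_le_supSpeedRatio_mul (hbdd : BddAbove ((fun u => ‖V u‖ / u) '' Ioc 0 t))
    (hu : u ∈ Ioc 0 t) : ‖V u‖ ≤ supSpeedRatio V t * u :=
  (div_le_iff₀ hu.1).1 (le_csSup hbdd (mem_image_of_mem _ hu))

theorem supSpeedRatio_nonneg (hbdd : BddAbove ((fun u => ‖V u‖ / u) '' Ioc 0 t)) (ht : 0 < t) :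
    0 ≤ supSpeedRatio V t :=
  nonneg_of_mul_nonneg_left ((norm_nonneg _).trans (norm_le_supSpeedRatio_mul hbdd ⟨ht, le_rfl⟩))
    ht

theorem supSpeedRatio_le (ht : 0 < t) (h : ∀ u ∈ Ioc 0 t, ‖V u‖ ≤ C * u) :
    supSpeedRatio V t ≤ C :=
  csSup_le ((nonempty_Ioc.2 ht).image _)
    (forall_mem_image.2 fun u hu => (div_le_iff₀ hu.1).2 (h u hu))

end SpeedRatio

section SmoothedDynamics

variable {F : Type*} [NormedAddCommGroup F] [NormedSpace ℝ F] {X V g : ℝ → F}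
  {δ t u D G K L Q : ℝ}

theorem norm_sub_le_of_norm_le_mul (ht : 0 ≤ t)
    (hX : ∀ s ∈ Icc 0 t, HasDerivWithinAt X (V s) (Ici 0) s) (hV0 : V 0 = 0)
    (hK : ∀ s ∈ Ioc 0 t, ‖V s‖ ≤ K * s) : ‖X t - X 0‖ ≤ K / 2 * t ^ 2 := by
  have hP (s : ℝ) : HasDerivAt (fun s => K / 2 * s ^ 2) (K * s) s :=
    ((hasDerivAt_pow 2 s).const_mul (K / 2)).congr_deriv (by ring)
  have key := norm_sub_le_sub_of_hasDerivWithinAt ht hX hP fun s hs => ?_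
  · simpa using key
  · rcases hs.1.eq_or_lt with rfl | hs0
    · simp [hV0]
    · exact hK s ⟨hs0, hs.2.le⟩

theorem norm_le_add_mul_sq_of_norm_le_mul (hL : 0 ≤ L)
    (hX : ∀ s ∈ Icc 0 t, HasDerivWithinAt X (V s) (Ici 0) s) (hV0 : V 0 = 0)
    (hK : ∀ s ∈ Ioc 0 t, ‖V s‖ ≤ K * s) (hg : ∀ s, ‖g s - g 0‖ ≤ L * ‖X s - X 0‖) :
    ∀ s ∈ Icc 0 t, ‖g s‖ ≤ ‖g 0‖ + L * K / 2 * s ^ 2 := fun s hs =>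
  calc ‖g s‖ ≤ ‖g 0‖ + ‖g s - g 0‖ := norm_le_insert' _ _
    _ ≤ ‖g 0‖ + L * (K / 2 * s ^ 2) := by
      gcongr
      refine (hg s).trans (mul_le_mul_of_nonneg_left ?_ hL)
      exact norm_sub_le_of_norm_le_mul hs.1 (fun r hr => hX r ⟨hr.1, hr.2.trans hs.2⟩) hV0
        fun r hr => hK r ⟨hr.1, hr.2.trans hs.2⟩
    _ = ‖g 0‖ + L * K / 2 * s ^ 2 := by ring

theorem norm_le_mul_of_le_delta (hδ : 0 < δ) (hQ : 0 ≤ Q)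
    (hV : ∀ s ∈ Icc 0 δ, HasDerivWithinAt V (-(3 / max δ s) • V s - g s) (Ici 0) s)
    (hV0 : V 0 = 0) (hg : ∀ s ∈ Icc 0 δ, ‖g s‖ ≤ G + Q * s ^ 2) (hu : u ∈ Icc 0 δ) :
    ‖V u‖ ≤ (G + Q * δ ^ 2 / 3) * u := by
  have hV' : ∀ s ∈ Icc 0 u, HasDerivWithinAt V (-(3 / δ) • V s - g s) (Ici 0) s := fun s hs => by
    simpa [max_eq_left (hs.2.trans hu.2)] using hV s ⟨hs.1, hs.2.trans hu.2⟩
  have hP (s : ℝ) : HasDerivAt (fun s => G * s + Q / 3 * s ^ 3) (G + Q * s ^ 2) s :=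
    (((hasDerivAt_id s).const_mul G).add ((hasDerivAt_pow 3 s).const_mul (Q / 3))).congr_deriv
      (by simp only [mul_one, Nat.cast_ofNat, Nat.add_one_sub_one]; ring)
  have key := norm_le_add_of_hasDerivWithinAt_neg_smul_sub hu.1 (by positivity) hV' hP
    fun s hs => hg s ⟨hs.1, hs.2.le.trans hu.2⟩
  rw [hV0, norm_zero] at key
  nlinarith [mul_nonneg (mul_nonneg hQ hu.1) (sub_nonneg.2 (pow_le_pow_left₀ hu.1 hu.2 2))]

theorem norm_le_mul_of_delta_le (hδ : 0 < δ) (hG : 0 ≤ G) (hQ : 0 ≤ Q)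
    (hV : ∀ s ∈ Icc δ t, HasDerivWithinAt V (-(3 / max δ s) • V s - g s) (Ici 0) s)
    (hg : ∀ s ∈ Icc δ t, ‖g s‖ ≤ G + Q * s ^ 2) (hVδ : ‖V δ‖ ≤ D * δ) (hu : u ∈ Icc δ t) :
    ‖V u‖ ≤ (D + G / 4 + Q * t ^ 2 / 6) * u := by
  have hV' : ∀ s ∈ Icc δ u,
      HasDerivWithinAt V (-((3 : ℕ) / s) • V s - g s) (Ici δ) s := fun s hs => by
    simpa [max_eq_right hs.1] using
      (hV s ⟨hs.1, hs.2.trans hu.2⟩).mono (Ici_subset_Ici.2 hδ.le)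
  have hP (s : ℝ) : HasDerivAt (fun s => G / 4 * s ^ 4 + Q / 6 * s ^ 6)
      (s ^ 3 * (G + Q * s ^ 2)) s :=
    (((hasDerivAt_pow 4 s).const_mul (G / 4)).add
      ((hasDerivAt_pow 6 s).const_mul (Q / 6))).congr_deriv
        (by simp only [Nat.cast_ofNat, Nat.add_one_sub_one]; ring)
  have key := pow_mul_norm_le_add_of_hasDerivWithinAt_neg_div_smul_sub 3 hδ hu.1 hV' hP
    fun s hs => hg s ⟨hs.1, hs.2.le.trans hu.2⟩
  have hu0 : 0 < u := hδ.trans_le hu.1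
  have hD : 0 ≤ D := nonneg_of_mul_nonneg_left ((norm_nonneg _).trans hVδ) hδ
  have hδu4 : δ ^ 4 ≤ u ^ 4 := pow_le_pow_left₀ hδ.le hu.1 4
  have hut2 : u ^ 2 ≤ t ^ 2 := pow_le_pow_left₀ hu0.le hu.2 2
  refine le_of_mul_le_mul_left ?_ (pow_pos hu0 3)
  nlinarith [mul_le_mul_of_nonneg_left hVδ (pow_nonneg hδ.le 3), mul_le_mul_of_nonneg_left hδu4 hD,
    mul_le_mul_of_nonneg_left hut2 (mul_nonneg hQ (pow_nonneg hu0.le 4)),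
    mul_nonneg hG (pow_nonneg hδ.le 4), mul_nonneg hQ (pow_nonneg hδ.le 6)]

theorem bddAbove_speedRatio_of_continuousOn (hδ : 0 < δ)
    (hV : ∀ s ∈ Icc 0 t, HasDerivWithinAt V (-(3 / max δ s) • V s - g s) (Ici 0) s)
    (hV0 : V 0 = 0) (hg : ContinuousOn g (Icc 0 t)) :
    BddAbove ((fun u => ‖V u‖ / u) '' Ioc 0 t) := by
  have hVc : ContinuousOn V (Icc 0 t) := fun s hs =>
    (hV s hs).continuousWithinAt.mono Icc_subset_Ici_self
  have hdamp : Continuous fun s => -(3 / max δ s) :=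
    (continuous_const.div (continuous_const.max continuous_id) fun s =>
      (hδ.trans_le (le_max_left δ s)).ne').neg
  obtain ⟨C, hC⟩ := exists_norm_le_mul_of_hasDerivWithinAt hV
    ((hdamp.continuousOn.smul hVc).sub hg) hV0
  exact bddAbove_speedRatio fun u hu => hC u (Ioc_subset_Icc_self hu)

theorem one_sub_mul_supSpeedRatio_delta_le (hδ : 0 < δ) (hL : 0 ≤ L)
    (hX : ∀ s ∈ Icc 0 δ, HasDerivWithinAt X (V s) (Ici 0) s)
    (hV : ∀ s ∈ Icc 0 δ, HasDerivWithinAt V (-(3 / max δ s) • V s - g s) (Ici 0) s)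
    (hV0 : V 0 = 0) (hg : ∀ s, ‖g s - g 0‖ ≤ L * ‖X s - X 0‖)
    (hbdd : BddAbove ((fun u => ‖V u‖ / u) '' Ioc 0 δ)) :
    (1 - L * δ ^ 2 / 6) * supSpeedRatio V δ ≤ ‖g 0‖ := by
  set M := supSpeedRatio V δ
  have hM0 : 0 ≤ M := supSpeedRatio_nonneg hbdd hδ
  have hforce := norm_le_add_mul_sq_of_norm_le_mul hL hX hV0
    (fun u hu => norm_le_supSpeedRatio_mul hbdd hu) hg
  have hself : M ≤ ‖g 0‖ + L * M / 2 * δ ^ 2 / 3 := supSpeedRatio_le hδ fun u hu =>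
    norm_le_mul_of_le_delta hδ (by positivity) hV hV0 hforce (Ioc_subset_Icc_self hu)
  linarith

theorem one_sub_mul_supSpeedRatio_le (hδ : 0 < δ) (hδt : δ ≤ t) (hL : 0 ≤ L)
    (hX : ∀ s ∈ Icc 0 t, HasDerivWithinAt X (V s) (Ici 0) s)
    (hV : ∀ s ∈ Icc 0 t, HasDerivWithinAt V (-(3 / max δ s) • V s - g s) (Ici 0) s)
    (hV0 : V 0 = 0) (hg : ∀ s, ‖g s - g 0‖ ≤ L * ‖X s - X 0‖)
    (hbdd : BddAbove ((fun u => ‖V u‖ / u) '' Ioc 0 t)) (hD : ∀ u ∈ Ioc 0 δ, ‖V u‖ ≤ D * u) :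
    (1 - L * t ^ 2 / 12) * supSpeedRatio V t ≤ D + ‖g 0‖ / 4 := by
  set M := supSpeedRatio V t
  have hM0 : 0 ≤ M := supSpeedRatio_nonneg hbdd (hδ.trans_le hδt)
  have hforce := norm_le_add_mul_sq_of_norm_le_mul hL hX hV0
    (fun u hu => norm_le_supSpeedRatio_mul hbdd hu) hg
  have hself : M ≤ D + ‖g 0‖ / 4 + L * M / 2 * t ^ 2 / 6 :=
    supSpeedRatio_le (hδ.trans_le hδt) fun u hu => by
      rcases le_total u δ with huδ | hδu
      · refine (hD u ⟨hu.1, huδ⟩).trans (mul_le_mul_of_nonneg_right ?_ hu.1.le)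
        have : 0 ≤ L * M / 2 * t ^ 2 / 6 := by positivity
        linarith [norm_nonneg (g 0)]
      · exact norm_le_mul_of_delta_le hδ (norm_nonneg _) (by positivity)
          (fun s hs => hV s ⟨hδ.le.trans hs.1, hs.2⟩)
          (fun s hs => hforce s ⟨hδ.le.trans hs.1, hs.2⟩)
          (hD δ ⟨hδ, le_rfl⟩) ⟨hδu, hu.2⟩
  linarith

end SmoothedDynamics

theorem one_sub_mul_sq_div_pos {L c x : ℝ} (hL : 0 < L) (hx : 0 ≤ x) (h : x < √(c / L)) :
    0 < 1 - L * x ^ 2 / c := by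
  have hlt : x ^ 2 * L < c := (lt_div_iff₀ hL).1 ((Real.lt_sqrt hx).1 h)
  have hc : 0 < c := lt_of_le_of_lt (by positivity) hlt
  rw [sub_pos, div_lt_one hc]
  linarith

theorem MemFL.continuous_gradient {n : ℕ} {L : ℝ} {f : E n → ℝ} (hf : MemFL n L f) :
    Continuous (gradient f) :=
  (LipschitzWith.of_dist_le' fun x y => by simpa only [dist_eq_norm] using hf.2.2 x y).continuous

/-- **Lemma (bound on `M_δ(t)` for `t > δ`).** For `f ∈ F_L`, `δ < √(6/L)` and
`δ < t < √(12/L)`, the solution of the smoothed ODE satisfies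
`M_δ(t) ≤ (5 - Lδ²/6)‖∇f(x₀)‖/(4(1 - Lδ²/6)(1 - Lt²/12))`. -/
theorem smoothed_ode_M_bound (n : ℕ) (L : ℝ) (hL : 0 < L)
    (f : E n → ℝ) (hf : MemFL n L f) (x0 : E n)
    (δ : ℝ) (hδ0 : 0 < δ) (hδ : δ < Real.sqrt (6 / L))
    (X V : ℝ → E n) (hXV : SmoothedSol n f δ x0 X V)
    (t : ℝ) (htδ : δ < t) (ht : t < Real.sqrt (12 / L)) :
    sSup ((fun u => ‖V u‖ / u) '' Set.Ioc (0:ℝ) t) ≤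
      (5 - L * δ ^ 2 / 6) * ‖gradient f x0‖ /
        (4 * (1 - L * δ ^ 2 / 6) * (1 - L * t ^ 2 / 12)) := by
  obtain ⟨hX0, hV0, hX, hV⟩ := hXV
  have ha := one_sub_mul_sq_div_pos hL hδ0.le hδ
  have hb := one_sub_mul_sq_div_pos hL (hδ0.trans htδ).le ht
  set g := fun s => gradient f (X s)
  have hg : ∀ s, ‖g s - g 0‖ ≤ L * ‖X s - X 0‖ := fun s => hf.2.2 _ _
  have hgc (T : ℝ) : ContinuousOn g (Icc 0 T) := hf.continuous_gradient.comp_continuousOn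
    fun s hs => (hX s hs.1).continuousWithinAt.mono Icc_subset_Ici_self
  have hbdd (T : ℝ) : BddAbove ((fun u => ‖V u‖ / u) '' Ioc 0 T) :=
    bddAbove_speedRatio_of_continuousOn hδ0 (fun s hs => hV s hs.1) hV0 (hgc T)
  have hM₁ := one_sub_mul_supSpeedRatio_delta_le hδ0 hL.le (fun s hs => hX s hs.1)
    (fun s hs => hV s hs.1) hV0 hg (hbdd δ)
  have hD : ∀ u ∈ Ioc 0 δ, ‖V u‖ ≤ ‖g 0‖ / (1 - L * δ ^ 2 / 6) * u := fun u hu =>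
    (norm_le_supSpeedRatio_mul (hbdd δ) hu).trans
      (mul_le_mul_of_nonneg_right ((le_div_iff₀' ha).2 hM₁) hu.1.le)
  have hM := one_sub_mul_supSpeedRatio_le hδ0 htδ.le hL.le (fun s hs => hX s hs.1)
    (fun s hs => hV s hs.1) hV0 hg (hbdd t) hD
  simp only [g, hX0] at hM
  calc supSpeedRatio V t
      ≤ (‖gradient f x0‖ / (1 - L * δ ^ 2 / 6) + ‖gradient f x0‖ / 4) / (1 - L * t ^ 2 / 12) :=
        (le_div_iff₀' hb).2 hM
    _ = _ := by
      rw [div_add_div _ _ ha.ne' four_ne_zero, div_div]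
      congr 1 <;> ring
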